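/- arXiv:1109.1910 — 3 statements merged into one kernel-verified Lean document; each statement's English description precedes it below -/
import Mathlib

section
/- If x : [0,T] → ℝ is a C² function with ẋ(0) = v₀ < c and satisfies ẍ(t) = (1 - ẋ(t)/c)·G(t) - k(t)·ẋ(t) where G(t) ≥ 0 whenever ẋ(t) ≤ c, and k(t) > 0 for all t, then ẋ(t) ≤ c for all t ∈ [0,T]. -/
open Set

/-! At a time where `ẋ = c` the factor `1 - ẋ / c` switches the forcing `G` off, so there
`ẍ = -k c < 0`: the velocity can touch the level `c` from below only while decreasing, hence it
never rises above it. -/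

theorem le_const_of_deriv_neg_of_eq {f : ℝ → ℝ} {a b c : ℝ} (hf : Differentiable ℝ f)
    (ha : f a ≤ c) (hbound : ∀ t ∈ Ico a b, f t = c → deriv f t < 0) :
    ∀ t ∈ Icc a b, f t ≤ c :=
  image_le_of_deriv_right_lt_deriv_boundary (B := fun _ => c) hf.continuous.continuousOn
    (fun t _ => (hf t).hasDerivAt.hasDerivWithinAt) ha (fun _ => hasDerivAt_const _ c) hbound

theorem stmt0_general (T c v₀ : ℝ) (hc : 0 < c) (hv₀ : v₀ < c)
    (x G k : ℝ → ℝ) (hx : ContDiff ℝ 2 x)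
    (hx0 : deriv x 0 = v₀)
    (hode : ∀ t ∈ Icc 0 T,
      deriv (deriv x) t = (1 - deriv x t / c) * G t - k t * deriv x t)
    (hkpos : ∀ t ∈ Icc 0 T, 0 < k t) :
    ∀ t ∈ Icc 0 T, deriv x t ≤ c := by
  have hv : Differentiable ℝ (deriv x) := (hx.iterate_deriv' 1 1).differentiable one_ne_zero
  refine le_const_of_deriv_neg_of_eq hv (hx0 ▸ hv₀.le) fun t ht hvt => ?_
  have htT : t ∈ Icc 0 T := Ico_subset_Icc_self ht
  have hdecel : deriv (deriv x) t = -(k t * c) := by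
    rw [hode t htT, hvt, div_self hc.ne', sub_self, zero_mul, zero_sub]
  rw [hdecel, neg_neg_iff_pos]
  exact mul_pos (hkpos t htT) hc

/-- If `x` is `C²` with `ẋ 0 = v₀ < c` and satisfies
`ẍ t = (1 - ẋ t / c) * G t - k t * ẋ t` on `[0,T]`, where `G t ≥ 0` whenever `ẋ t ≤ c`
and `k t > 0`, then `ẋ t ≤ c` on `[0,T]`. -/
theorem stmt0 (T c v₀ : ℝ) (hT : 0 ≤ T) (hc : 0 < c) (hv₀ : v₀ < c)
    (x G k : ℝ → ℝ) (hx : ContDiff ℝ 2 x)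
    (hG : Continuous G) (hk : Continuous k)
    (hx0 : deriv x 0 = v₀)
    (hode : ∀ t ∈ Icc 0 T,
      deriv (deriv x) t = (1 - deriv x t / c) * G t - k t * deriv x t)
    (hGpos : ∀ t ∈ Icc 0 T, deriv x t ≤ c → 0 ≤ G t)
    (hkpos : ∀ t ∈ Icc 0 T, 0 < k t) :
    ∀ t ∈ Icc 0 T, deriv x t ≤ c :=
  stmt0_general T c v₀ hc hv₀ x G k hx hx0 hode hkpos
end

section
/- If x : [0,T] → ℝ is a C² function with x(0) = 0, ẋ(0) = v₀ ∈ [0,c), satisfying ẍ(t) = (1 - ẋ(t)/c)·G(t,ẋ(t)) - k(t)·ẋ(t), where G(t,v) ≥ 0 for v ≤ c, G(t,v) = 0 for v ≥ c, and k(t) > 0, then 0 ≤ ẋ(t) ≤ c and hence 0 ≤ x(t) ≤ c·t for all t ∈ [0,T]. -/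
/-!
Below `v = 0` the vector field `(1 - v/c) G(t,v) - k(t) v` is strictly positive, and above
`v = c` it equals `-k(t) v < 0`; so the speed `ẋ` can never leave `[0, c]`, and integrating
`0 ≤ ẋ ≤ c` gives `0 ≤ x t ≤ c t`.
-/

open Set

theorem nonneg_of_deriv_pos_of_neg {f : ℝ → ℝ} {a b : ℝ} (hf : ContinuousOn f (Icc a b))
    (hf' : DifferentiableOn ℝ f (Ioo a b)) (ha : 0 ≤ f a)
    (hpos : ∀ t ∈ Ioo a b, f t < 0 → 0 < deriv f t) : ∀ t ∈ Icc a b, 0 ≤ f t := by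
  intro t ht
  by_contra! hft
  -- `s` is the last time in `[a, t]` at which `f ≥ 0`; the mean value theorem on `[s, t]`
  -- gives a point where `f < 0` but `f' < 0`.
  set A := Icc a t ∩ f ⁻¹' Ici 0
  have hA_bdd : BddAbove A := ⟨t, fun s hs => hs.1.2⟩
  have hsA : sSup A ∈ A :=
    ((hf.mono (Icc_subset_Icc_right ht.2)).preimage_isClosed_of_isClosed isClosed_Icc
      isClosed_Ici).csSup_mem ⟨a, ⟨le_rfl, ht.1⟩, ha⟩ hA_bdd
  set s := sSup A
  have hst : s < t := hsA.1.2.lt_of_ne fun h => hft.not_ge (h ▸ hsA.2)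
  obtain ⟨ξ, hξ, hslope⟩ := exists_deriv_eq_slope f hst
    (hf.mono (Icc_subset_Icc hsA.1.1 ht.2)) (hf'.mono (Ioo_subset_Ioo hsA.1.1 ht.2))
  have hfξ : f ξ < 0 := by
    by_contra! h
    exact hξ.1.not_ge (le_csSup hA_bdd ⟨⟨hsA.1.1.trans hξ.1.le, hξ.2.le⟩, h⟩)
  have hderiv_pos := hpos ξ ⟨hsA.1.1.trans_lt hξ.1, hξ.2.trans_le ht.2⟩ hfξ
  have hslope_neg : (f t - f s) / (t - s) < 0 :=
    div_neg_of_neg_of_pos (by linarith [show 0 ≤ f s from hsA.2]) (sub_pos.2 hst)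
  linarith

section SaturatedODE

variable {v k : ℝ → ℝ} {G : ℝ → ℝ → ℝ} {c T : ℝ}

theorem nonneg_of_saturated_ode (hc : 0 < c) (hv : ContinuousOn v (Icc 0 T))
    (hv' : DifferentiableOn ℝ v (Ioo 0 T)) (hv0 : 0 ≤ v 0)
    (hode : ∀ t ∈ Ioo 0 T, deriv v t = (1 - v t / c) * G t (v t) - k t * v t)
    (hGpos : ∀ t ∈ Ioo 0 T, ∀ u, u ≤ c → 0 ≤ G t u) (hkpos : ∀ t ∈ Ioo 0 T, 0 < k t) :
    ∀ t ∈ Icc 0 T, 0 ≤ v t := by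
  refine nonneg_of_deriv_pos_of_neg hv hv' hv0 fun t ht hvt => ?_
  have hG := hGpos t ht (v t) (by linarith)
  have hfactor : 0 < 1 - v t / c := by linarith [div_neg_of_neg_of_pos hvt hc]
  have hk := hkpos t ht
  rw [hode t ht]
  nlinarith

theorem le_of_saturated_ode (hc : 0 ≤ c) (hv : ContinuousOn v (Icc 0 T))
    (hv' : DifferentiableOn ℝ v (Ioo 0 T)) (hv0 : v 0 ≤ c)
    (hode : ∀ t ∈ Ioo 0 T, deriv v t = (1 - v t / c) * G t (v t) - k t * v t)
    (hGzero : ∀ t ∈ Ioo 0 T, ∀ u, c ≤ u → G t u = 0) (hkpos : ∀ t ∈ Ioo 0 T, 0 < k t) :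
    ∀ t ∈ Icc 0 T, v t ≤ c := by
  have key : ∀ t ∈ Icc 0 T, 0 ≤ c - v t := by
    refine nonneg_of_deriv_pos_of_neg (continuousOn_const.sub hv)
      (differentiableOn_const c |>.sub hv') (sub_nonneg.2 hv0) fun t ht hvt => ?_
    have hk := hkpos t ht
    rw [deriv_const_sub, hode t ht, hGzero t ht (v t) (by linarith)]
    nlinarith
  exact fun t ht => sub_nonneg.1 (key t ht)

end SaturatedODE

theorem nonneg_and_le_mul_of_deriv_mem_Icc {x : ℝ → ℝ} {c T : ℝ}
    (hx : ContinuousOn x (Icc 0 T)) (hx' : DifferentiableOn ℝ x (Ioo 0 T)) (hx0 : x 0 = 0)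
    (hderiv : ∀ t ∈ Ioo 0 T, 0 ≤ deriv x t ∧ deriv x t ≤ c) :
    ∀ t ∈ Icc 0 T, 0 ≤ x t ∧ x t ≤ c * t := by
  intro t ht
  have h0 : (0 : ℝ) ∈ Icc 0 T := ⟨le_rfl, ht.1.trans ht.2⟩
  rw [← interior_Icc] at hx' hderiv
  have hlow := (convex_Icc 0 T).mul_sub_le_image_sub_of_le_deriv hx hx'
    (fun s hs => (hderiv s hs).1) 0 h0 t ht ht.1
  have hupp := (convex_Icc 0 T).image_sub_le_mul_sub_of_deriv_le hx hx'
    (fun s hs => (hderiv s hs).2) 0 h0 t ht ht.1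
  rw [hx0, sub_zero, sub_zero] at hlow hupp
  exact ⟨by linarith, hupp⟩

theorem stmt1_general (T c v₀ : ℝ) (hc : 0 < c)
    (hv₀ : 0 ≤ v₀) (hv₀' : v₀ < c)
    (x : ℝ → ℝ) (G : ℝ → ℝ → ℝ) (k : ℝ → ℝ)
    (hx : ContDiff ℝ 2 x)
    (hx00 : x 0 = 0) (hx0 : deriv x 0 = v₀)
    (hode : ∀ t ∈ Icc 0 T,
      deriv (deriv x) t = (1 - deriv x t / c) * G t (deriv x t) - k t * deriv x t)
    (hGpos : ∀ t ∈ Icc 0 T, ∀ v : ℝ, v ≤ c → 0 ≤ G t v)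
    (hGzero : ∀ t ∈ Icc 0 T, ∀ v : ℝ, c ≤ v → G t v = 0)
    (hkpos : ∀ t ∈ Icc 0 T, 0 < k t) :
    ∀ t ∈ Icc 0 T, (0 ≤ deriv x t ∧ deriv x t ≤ c) ∧ (0 ≤ x t ∧ x t ≤ c * t) := by
  have hxd : Differentiable ℝ x := hx.differentiable two_ne_zero
  have hvd : Differentiable ℝ (deriv x) :=
    ((contDiff_succ_iff_deriv (n := 1)).mp hx).2.2.differentiable one_ne_zero
  have hI : Ioo (0 : ℝ) T ⊆ Icc 0 T := Ioo_subset_Icc_self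
  have hlow := nonneg_of_saturated_ode hc hvd.continuous.continuousOn hvd.differentiableOn
    (hx0 ▸ hv₀) (fun t ht => hode t (hI ht)) (fun t ht => hGpos t (hI ht))
    (fun t ht => hkpos t (hI ht))
  have hupp := le_of_saturated_ode hc.le hvd.continuous.continuousOn hvd.differentiableOn
    (hx0 ▸ hv₀'.le) (fun t ht => hode t (hI ht)) (fun t ht => hGzero t (hI ht))
    (fun t ht => hkpos t (hI ht))
  have hpos := nonneg_and_le_mul_of_deriv_mem_Icc hxd.continuous.continuousOn
    hxd.differentiableOn hx00 fun t ht => ⟨hlow t (hI ht), hupp t (hI ht)⟩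
  exact fun t ht => ⟨⟨hlow t ht, hupp t ht⟩, hpos t ht⟩

/-- If `x` is `C²` with `x 0 = 0`, `ẋ 0 = v₀ ∈ [0,c)`, and
`ẍ t = (1 - ẋ t / c) * G (t, ẋ t) - k t * ẋ t` on `[0,T]`, where `G t v ≥ 0` for `v ≤ c`,
`G t v = 0` for `v ≥ c` and `k > 0`, then `0 ≤ ẋ t ≤ c` and hence `0 ≤ x t ≤ c * t`. -/
theorem stmt1 (T c v₀ : ℝ) (hT : 0 ≤ T) (hc : 0 < c)
    (hv₀ : 0 ≤ v₀) (hv₀' : v₀ < c)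
    (x : ℝ → ℝ) (G : ℝ → ℝ → ℝ) (k : ℝ → ℝ)
    (hx : ContDiff ℝ 2 x) (hG : Continuous (Function.uncurry G)) (hk : Continuous k)
    (hx00 : x 0 = 0) (hx0 : deriv x 0 = v₀)
    (hode : ∀ t ∈ Icc 0 T,
      deriv (deriv x) t = (1 - deriv x t / c) * G t (deriv x t) - k t * deriv x t)
    (hGpos : ∀ t ∈ Icc 0 T, ∀ v : ℝ, v ≤ c → 0 ≤ G t v)
    (hGzero : ∀ t ∈ Icc 0 T, ∀ v : ℝ, c ≤ v → G t v = 0)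
    (hkpos : ∀ t ∈ Icc 0 T, 0 < k t) :
    ∀ t ∈ Icc 0 T, (0 ≤ deriv x t ∧ deriv x t ≤ c) ∧ (0 ≤ x t ∧ x t ≤ c * t) :=
  stmt1_general T c v₀ hc hv₀ hv₀' x G k hx hx00 hx0 hode hGpos hGzero hkpos
end

section
/- Supersolution construction via boundary distance: let Ω ⊂ ℝ³ be C² and X₁-periodic, and suppose d : Ω̄ → [0,∞) is a bounded X₁-periodic C² function with bounded first and second derivatives such that Dd·N ≤ -1 on ∂Ω. Then for any bounded continuous data, there exist constants k₁, k₂, k₃ ≥ 0 such that wₑ(x,t) = k₁ + k₂t + k₃(ε‖d‖_∞ - ε d(x/ε)) satisfies: (i) on the boundary, χ ∂wₑ/∂n ≥ k₃χ whenever k₃ is large enough, dominating the bounded production term; (ii) in the interior, ∂wₑ/∂t - εχΔwₑ + c·Dwₑ ≥ k₂ - C(k₃) with C(k₃) independent of ε for k₂ large; (iii) wₑ ≥ u₀ at x₁ = 0 for k₁ large. Consequently wₑ is a supersolution of the nutrient problem uniformly in ε. -/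
open Set MeasureTheory Pointwise

noncomputable section

abbrev E3 := EuclideanSpace ℝ (Fin 3)

def lap3 (f : E3 → ℝ) (x : E3) : ℝ :=
  ∑ i : Fin 3, fderiv ℝ (fun y => fderiv ℝ f y (EuclideanSpace.single i 1)) x
    (EuclideanSpace.single i 1)

/-!
The barrier is built from the rescaled profile `ε d(x/ε)`: its gradient `Dd(x/ε)` is of order one
and its Laplacian is `ε⁻¹ Δd(x/ε)`, so the diffusion term `εχΔ` of the barrier is bounded
independently of `ε`. The sign condition `Dd·N ≤ -1` makes the outward flux of
`-k₃ ε d(x/ε)` at least `k₃`, the slope `k₂` absorbs the bounded interior terms, and since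
`ε D₀ - ε d(x/ε) ≥ 0` the constant `k₁` alone dominates the Dirichlet data.
-/

section Frontier

variable {G₀ α : Type*} [GroupWithZero G₀] [MulAction G₀ α] [TopologicalSpace α]
  [ContinuousConstSMul G₀ α]

theorem frontier_smul₀ {c : G₀} (hc : c ≠ 0) (s : Set α) : frontier (c • s) = c • frontier s :=
  ((Homeomorph.smulOfNeZero c hc).image_frontier s).symm

theorem mem_frontier_of_mem_frontier_inter {s t : Set α} {x : α}
    (hx : x ∈ frontier (s ∩ t)) (ht : x ∈ interior t) : x ∈ frontier s := by
  rcases frontier_inter_subset s t hx with h | h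
  · exact h.1
  · exact absurd ht h.2.2

theorem inv_smul_mem_frontier_of_mem_frontier_smul_inter {c : G₀} (hc : c ≠ 0) {s t : Set α}
    {x : α} (hx : x ∈ frontier (c • s ∩ t)) (ht : x ∈ interior t) : c⁻¹ • x ∈ frontier s := by
  have hx' := mem_frontier_of_mem_frontier_inter hx ht
  rwa [frontier_smul₀ hc, mem_smul_set_iff_inv_smul_mem₀ hc] at hx'

end Frontier

theorem mem_interior_setOf_nonneg_apply {ι : Type*} [Fintype ι] {i : ι} {x : EuclideanSpace ℝ ι}
    (hx : 0 < x i) : x ∈ interior {y : EuclideanSpace ℝ ι | 0 ≤ y i} := by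
  have hopen : IsOpen {y : EuclideanSpace ℝ ι | 0 < y i} :=
    isOpen_lt continuous_const (by fun_prop)
  exact interior_maximal (ofPred_subset_ofPred.mpr fun _ => le_of_lt) hopen hx

theorem fderiv_const_add_mul_comp_smul {𝕜 E : Type*} [NontriviallyNormedField 𝕜]
    [NormedAddCommGroup E] [NormedSpace 𝕜 E] (C k a : 𝕜) (g : E → 𝕜) (x : E) :
    fderiv 𝕜 (fun y => C + k * g (a • y)) x = (k * a) • fderiv 𝕜 g (a • x) := by
  rw [fderiv_const_add, mul_smul, ← fderiv_comp_smul a (f := g)]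
  exact congrFun (fderiv_const_smul_field (𝕜 := 𝕜) k (f := fun y => g (a • y))) x

theorem lap3_const_add_mul_comp_smul (C k a : ℝ) (g : E3 → ℝ) (x : E3) :
    lap3 (fun y => C + k * g (a • y)) x = k * a ^ 2 * lap3 g (a • x) := by
  simp only [lap3, Finset.mul_sum]
  refine Finset.sum_congr rfl fun i _ => ?_
  set v : E3 := EuclideanSpace.single i 1
  have hgrad : (fun y => fderiv ℝ (fun z => C + k * g (a • z)) y v)
      = fun y => 0 + (k * a) * fderiv ℝ g (a • y) v := by
    funext y
    rw [fderiv_const_add_mul_comp_smul, zero_add, smul_apply, smul_eq_mul]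
  rw [hgrad, fderiv_const_add_mul_comp_smul (g := fun z => fderiv ℝ g z v)]
  simp only [smul_apply, smul_eq_mul]
  ring

section Barrier

variable {E : Type*} [NormedAddCommGroup E] [NormedSpace ℝ E]

def barrier (k₁ k₂ k₃ ε D₀ : ℝ) (d : E → ℝ) (x : E) (t : ℝ) : ℝ :=
  k₁ + k₂ * t + k₃ * (ε * D₀ - ε * d (ε⁻¹ • x))

variable {k₁ k₂ k₃ ε D₀ : ℝ} {d : E → ℝ}

theorem barrier_eq_const_add_mul_comp_smul (t : ℝ) :
    (fun y => barrier k₁ k₂ k₃ ε D₀ d y t)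
      = fun y => (k₁ + k₂ * t + k₃ * ε * D₀) + -(k₃ * ε) * d (ε⁻¹ • y) := by
  funext y
  simp only [barrier]
  ring

theorem deriv_barrier (x : E) (t : ℝ) : deriv (barrier k₁ k₂ k₃ ε D₀ d x) t = k₂ := by
  have h : HasDerivAt (barrier k₁ k₂ k₃ ε D₀ d x) (k₂ * 1) t :=
    (((hasDerivAt_id t).const_mul k₂).const_add k₁).add_const _
  simpa using h.deriv

theorem fderiv_barrier_apply (hε : ε ≠ 0) (t : ℝ) (x v : E) :
    fderiv ℝ (fun y => barrier k₁ k₂ k₃ ε D₀ d y t) x v = -k₃ * fderiv ℝ d (ε⁻¹ • x) v := by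
  rw [barrier_eq_const_add_mul_comp_smul, fderiv_const_add_mul_comp_smul]
  simp only [smul_apply, smul_eq_mul]
  field_simp

theorem le_fderiv_barrier_apply (hε : ε ≠ 0) (hk₃ : 0 ≤ k₃) {t : ℝ} {x n : E}
    (hn : fderiv ℝ d (ε⁻¹ • x) n ≤ -1) :
    k₃ ≤ fderiv ℝ (fun y => barrier k₁ k₂ k₃ ε D₀ d y t) x n := by
  rw [fderiv_barrier_apply hε]
  nlinarith

theorem le_barrier (hk₂ : 0 ≤ k₂) (hk₃ : 0 ≤ k₃) (hε : 0 ≤ ε) {x : E} {t : ℝ}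
    (ht : 0 ≤ t) (hd : d (ε⁻¹ • x) ≤ D₀) : k₁ ≤ barrier k₁ k₂ k₃ ε D₀ d x t := by
  have hspace : 0 ≤ k₃ * (ε * (D₀ - d (ε⁻¹ • x))) :=
    mul_nonneg hk₃ (mul_nonneg hε (sub_nonneg.2 hd))
  simp only [barrier]
  nlinarith [mul_nonneg hk₂ ht]

end Barrier

theorem lap3_barrier {k₁ k₂ k₃ ε D₀ : ℝ} {d : E3 → ℝ} (hε : ε ≠ 0) (t : ℝ) (x : E3) :
    ε * lap3 (fun y => barrier k₁ k₂ k₃ ε D₀ d y t) x = -k₃ * lap3 d (ε⁻¹ • x) := by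
  rw [barrier_eq_const_add_mul_comp_smul, lap3_const_add_mul_comp_smul]
  field_simp

theorem le_deriv_sub_lap3_add_fderiv_barrier {k₁ k₂ k₃ ε D₀ χ A L : ℝ} {d : E3 → ℝ}
    (hε : ε ≠ 0) (hχ : 0 ≤ χ) (hk₃ : 0 ≤ k₃) {t : ℝ} {x v : E3}
    (hA : |fderiv ℝ d (ε⁻¹ • x) v| ≤ A) (hL : |lap3 d (ε⁻¹ • x)| ≤ L) :
    k₂ - k₃ * (χ * L + A) ≤ deriv (barrier k₁ k₂ k₃ ε D₀ d x) t
      - ε * χ * lap3 (fun y => barrier k₁ k₂ k₃ ε D₀ d y t) x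
      + fderiv ℝ (fun y => barrier k₁ k₂ k₃ ε D₀ d y t) x v := by
  rw [deriv_barrier, mul_right_comm ε χ, lap3_barrier hε, fderiv_barrier_apply hε]
  rw [abs_le] at hA hL
  nlinarith [mul_nonneg hχ hk₃]

theorem stmt13_general (T ε χ : ℝ) (hε : 0 < ε) (hχ : 0 < χ)
    (Ω : Set E3)
    (N : E3 → E3)
    (d : E3 → ℝ)
    (D₀ D₁ D₂ : ℝ)
    (hd0 : ∀ X, 0 ≤ d X ∧ d X ≤ D₀)
    (hd1 : ∀ X (w : E3), |fderiv ℝ d X w| ≤ D₁ * ‖w‖)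
    (hd2 : ∀ X, |lap3 d X| ≤ D₂)
    (hdN : ∀ X ∈ frontier Ω, fderiv ℝ d X (N X) ≤ -1)
    (Ωε : Set E3) (hΩε : Ωε = (ε • Ω) ∩ {x : E3 | 0 ≤ x 0})
    (c : E3 → ℝ → E3) (Cc : ℝ) (hc : ∀ x t, ‖c x t‖ ≤ Cc)
    (B : ℝ) (hB : 0 ≤ B)
    (u₀ : ℝ → ℝ) (hu₀ : ∀ t ∈ Icc 0 T, |u₀ t| ≤ B) :
    ∃ k₁ k₂ k₃ : ℝ, 0 ≤ k₁ ∧ 0 ≤ k₂ ∧ 0 ≤ k₃ ∧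
      (∀ w : E3 → ℝ → ℝ,
        (w = fun x t => k₁ + k₂ * t + k₃ * (ε * D₀ - ε * d (ε⁻¹ • x))) →
        -- (i) boundary flux domination
        (∀ x ∈ frontier Ωε, 0 < x 0 → ∀ t ∈ Icc 0 T,
          k₃ * χ ≤ χ * fderiv ℝ (fun y => w y t) x (N (ε⁻¹ • x)) ∧ B ≤ k₃ * χ) ∧
        -- (ii) interior supersolution inequality
        (∀ x ∈ Ωε, ∀ t ∈ Icc 0 T,
          B ≤ deriv (w x) t - ε * χ * lap3 (fun y => w y t) x
                + fderiv ℝ (fun y => w y t) x (c x t)) ∧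
        -- (iii) domination of the Dirichlet data at the pylorus
        (∀ x : E3, x 0 = 0 → ∀ t ∈ Icc 0 T, u₀ t ≤ w x t)) := by
  have hD₁ : 0 ≤ D₁ := by
    simpa [PiLp.norm_single] using (abs_nonneg _).trans (hd1 0 (EuclideanSpace.single 0 1))
  have hD₂ : 0 ≤ D₂ := (abs_nonneg _).trans (hd2 0)
  have hCc : 0 ≤ Cc := (norm_nonneg _).trans (hc 0 0)
  have hk₃ : 0 ≤ B / χ := div_nonneg hB hχ.le
  refine ⟨B, B + B / χ * (χ * D₂ + D₁ * Cc), B / χ, hB, by positivity, hk₃, fun w hw => ?_⟩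
  obtain rfl : w = barrier B (B + B / χ * (χ * D₂ + D₁ * Cc)) (B / χ) ε D₀ d := hw
  refine ⟨fun x hx hx0 t _ => ⟨?_, ?_⟩, fun x _ t _ => ?_, fun x _ t ht => ?_⟩
  · rw [hΩε] at hx
    have hxΩ := inv_smul_mem_frontier_of_mem_frontier_smul_inter hε.ne' hx
      (mem_interior_setOf_nonneg_apply hx0)
    rw [mul_comm]
    exact mul_le_mul_of_nonneg_left (le_fderiv_barrier_apply hε.ne' hk₃ (hdN _ hxΩ)) hχ.le
  · rw [div_mul_cancel₀ _ hχ.ne']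
  · have hA : |fderiv ℝ d (ε⁻¹ • x) (c x t)| ≤ D₁ * Cc :=
      (hd1 _ _).trans (mul_le_mul_of_nonneg_left (hc x t) hD₁)
    calc B = B + B / χ * (χ * D₂ + D₁ * Cc) - B / χ * (χ * D₂ + D₁ * Cc) := by ring
      _ ≤ _ := le_deriv_sub_lap3_add_fderiv_barrier hε.ne' hχ.le hk₃ hA (hd2 _)
  · exact (le_abs_self _).trans <| (hu₀ t ht).trans <|
      le_barrier (by positivity) hk₃ hε.le ht.1 (hd0 _).2

/-- Supersolution construction via a boundary-defining function: if `d` is a bounded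
`X₁`-periodic `C²` function with bounded derivatives and `Dd·N ≤ -1` on `∂Ω`, then
there are constants `k₁, k₂, k₃ ≥ 0` such that
`w(x,t) = k₁ + k₂ t + k₃ (ε‖d‖_∞ - ε d(x/ε))` is a supersolution of the nutrient
problem uniformly in `ε`: (i) its boundary flux `χ ∂w/∂n ≥ k₃ χ ≥ B` dominates the
bounded production term, (ii) `∂w/∂t - εχΔw + c·Dw ≥ B` in the interior,
(iii) `w ≥ u₀` at `x₁ = 0`. -/
theorem stmt13 (T ε χ : ℝ) (hT : 0 < T) (hε : 0 < ε) (hχ : 0 < χ)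
    (Ω : Set E3) (hΩ : IsOpen Ω)
    (e₁ : E3) (he₁ : e₁ = EuclideanSpace.single 0 1)
    (hper : ∀ X : E3, X ∈ Ω ↔ X + e₁ ∈ Ω)
    (N : E3 → E3) (hNunit : ∀ X ∈ frontier Ω, ‖N X‖ = 1)
    (d : E3 → ℝ) (hd : ContDiff ℝ 2 d)
    (hdper : ∀ X : E3, d (X + e₁) = d X)
    (D₀ D₁ D₂ : ℝ)
    (hd0 : ∀ X, 0 ≤ d X ∧ d X ≤ D₀)
    (hd1 : ∀ X (w : E3), |fderiv ℝ d X w| ≤ D₁ * ‖w‖)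
    (hd2 : ∀ X, |lap3 d X| ≤ D₂)
    (hdN : ∀ X ∈ frontier Ω, fderiv ℝ d X (N X) ≤ -1)
    (Ωε : Set E3) (hΩε : Ωε = (ε • Ω) ∩ {x : E3 | 0 ≤ x 0})
    (c : E3 → ℝ → E3) (Cc : ℝ) (hc : ∀ x t, ‖c x t‖ ≤ Cc)
    (B : ℝ) (hB : 0 ≤ B)
    (u₀ : ℝ → ℝ) (hu₀ : ∀ t ∈ Icc 0 T, |u₀ t| ≤ B) :
    ∃ k₁ k₂ k₃ : ℝ, 0 ≤ k₁ ∧ 0 ≤ k₂ ∧ 0 ≤ k₃ ∧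
      (∀ w : E3 → ℝ → ℝ,
        (w = fun x t => k₁ + k₂ * t + k₃ * (ε * D₀ - ε * d (ε⁻¹ • x))) →
        -- (i) boundary flux domination
        (∀ x ∈ frontier Ωε, 0 < x 0 → ∀ t ∈ Icc 0 T,
          k₃ * χ ≤ χ * fderiv ℝ (fun y => w y t) x (N (ε⁻¹ • x)) ∧ B ≤ k₃ * χ) ∧
        -- (ii) interior supersolution inequality
        (∀ x ∈ Ωε, ∀ t ∈ Icc 0 T,
          B ≤ deriv (w x) t - ε * χ * lap3 (fun y => w y t) x
                + fderiv ℝ (fun y => w y t) x (c x t)) ∧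
        -- (iii) domination of the Dirichlet data at the pylorus
        (∀ x : E3, x 0 = 0 → ∀ t ∈ Icc 0 T, u₀ t ≤ w x t)) :=
  stmt13_general T ε χ hε hχ Ω N d D₀ D₁ D₂ hd0 hd1 hd2 hdN Ωε hΩε c Cc hc B hB u₀ hu₀

end
end
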